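/- arXiv:1601.03754 — 4 statements merged into one kernel-verified Lean document; each statement's English description precedes it below -/
import Mathlib

section
/- Let p ∈ X with current owner c_j (meaning d(p, c_j) ≤ d(p, c) for all centroids c), and suppose after an update each centroid c_i moves to c_i' with d(c_i, c_i') ≤ m_i. If d(p, c_j) + m_j < min_{k ≠ j} d(p, c_k) - max_i m_i, then c_j' is the unique nearest updated centroid to p: d(p, c_j') < d(p, c_k') for all k ≠ j. -/
section Perturbation

variable {X : Type*} [PseudoMetricSpace X] {p x x' y y' : X} {r s : ℝ}

lemma dist_le_dist_add_of_dist_le (hx : dist x x' ≤ r) : dist p x' ≤ dist p x + r :=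
  (dist_triangle p x x').trans (by gcongr)

lemma dist_sub_le_dist_of_dist_le (hx : dist x x' ≤ r) : dist p x - r ≤ dist p x' := by
  have := dist_le_dist_add_of_dist_le (p := p) ((dist_comm x' x).trans_le hx)
  linarith

lemma dist_lt_dist_of_moved (hx : dist x x' ≤ r) (hy : dist y y' ≤ s)
    (h : dist p x + r < dist p y - s) : dist p x' < dist p y' :=
  calc dist p x' ≤ dist p x + r := dist_le_dist_add_of_dist_le hx
    _ < dist p y - s := h
    _ ≤ dist p y' := dist_sub_le_dist_of_dist_le hy

end Perturbation

theorem stmt_2_general {X : Type*} [MetricSpace X] {ι : Type*} [Fintype ι] [DecidableEq ι] [Nonempty ι]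
    (c c' : ι → X) (m : ι → ℝ) (p : X) (j : ι)
    (hne : (Finset.univ.erase j).Nonempty)
    (hm : ∀ i, dist (c i) (c' i) ≤ m i)
    (h : dist p (c j) + m j <
      (Finset.univ.erase j).inf' hne (fun k => dist p (c k)) -
        Finset.univ.sup' Finset.univ_nonempty m) :
    ∀ k ≠ j, dist p (c' j) < dist p (c' k) := by
  intro k hk
  have hmin : (Finset.univ.erase j).inf' hne (fun k => dist p (c k)) ≤ dist p (c k) :=
    Finset.inf'_le _ (Finset.mem_erase.2 ⟨hk, Finset.mem_univ k⟩)
  have hmax : m k ≤ Finset.univ.sup' Finset.univ_nonempty m :=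
    Finset.le_sup' _ (Finset.mem_univ k)
  exact dist_lt_dist_of_moved (hm j) (hm k) (by linarith)

theorem stmt_2 {X : Type*} [MetricSpace X] {ι : Type*} [Fintype ι] [DecidableEq ι] [Nonempty ι]
    (c c' : ι → X) (m : ι → ℝ) (p : X) (j : ι)
    (hne : (Finset.univ.erase j).Nonempty)
    (hm : ∀ i, dist (c i) (c' i) ≤ m i)
    (howner : ∀ i, dist p (c j) ≤ dist p (c i))
    (h : dist p (c j) + m j <
      (Finset.univ.erase j).inf' hne (fun k => dist p (c k)) -
        Finset.univ.sup' Finset.univ_nonempty m) :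
    ∀ k ≠ j, dist p (c' j) < dist p (c' k) :=
  stmt_2_general c c' m p j hne hm h
end

section
/- If u ≥ max_{q ∈ D} d(q, c_q), where c_q denotes the nearest centroid in C to q, and d_min(D, R) > u for a subset R ⊆ C, then every point q ∈ D has the same nearest centroid in C as in C \ R. -/
theorem Finset.inf'_sdiff_eq_of_inf'_lt {ι α : Type*} [LinearOrder α] [DecidableEq ι]
    {s t : Finset ι} (hs : s.Nonempty) (hst : (s \ t).Nonempty) {f : ι → α}
    (h : ∀ r ∈ t, s.inf' hs f < f r) :
    s.inf' hs f = (s \ t).inf' hst f := by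
  refine le_antisymm (Finset.inf'_mono f Finset.sdiff_subset hst) ?_
  obtain ⟨c, hcs, hc⟩ := Finset.exists_mem_eq_inf' hs f
  have hct : c ∉ t := fun hct => (h c hct).ne hc
  exact hc ▸ Finset.inf'_le f (Finset.mem_sdiff.mpr ⟨hcs, hct⟩)

theorem stmt_5_general {X : Type*} [MetricSpace X] [DecidableEq X]
    (D C R : Finset X) (hC : C.Nonempty)
    (hCR : (C \ R).Nonempty) (u : ℝ)
    (hu : ∀ q ∈ D, C.inf' hC (fun cc => dist q cc) ≤ u)
    (hmin : ∀ q ∈ D, ∀ r ∈ R, u < dist q r) :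
    ∀ q ∈ D, C.inf' hC (fun cc => dist q cc)
      = (C \ R).inf' hCR (fun cc => dist q cc) :=
  fun q hq => Finset.inf'_sdiff_eq_of_inf'_lt hC hCR fun r hr =>
    (hu q hq).trans_lt (hmin q hq r hr)

theorem stmt_5 {X : Type*} [MetricSpace X] [DecidableEq X]
    (D C R : Finset X) (hD : D.Nonempty) (hC : C.Nonempty)
    (hRC : R ⊆ C) (hCR : (C \ R).Nonempty) (u : ℝ)
    (hu : ∀ q ∈ D, C.inf' hC (fun cc => dist q cc) ≤ u)
    (hmin : ∀ q ∈ D, ∀ r ∈ R, u < dist q r) :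
    ∀ q ∈ D, C.inf' hC (fun cc => dist q cc)
      = (C \ R).inf' hCR (fun cc => dist q cc) :=
  stmt_5_general D C R hC hCR u hu hmin
end

section
/- Let p have owner c_j among centroids C (d(p, c_j) ≤ d(p, c) for all c ∈ C), let each c_i move to c_i' with d(c_i, c_i') ≤ m_i, ℓ a lower bound with ℓ ≤ d(p, c_k) for all k ≠ j, and u ≥ d(p, c_j). If max(ℓ − max_i m_i, min_{k ≠ j} d(c_k', c_j')/2) > u + m_j, then d(p, c_j') < d(p, c_k') for all k ≠ j. -/
/-!
Both bounds certify that `c' j` stays the nearest centroid to `p` via the triangle inequality.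
The first compares `d(p, c'_j) ≤ u + m_j` with `d(p, c'_k) ≥ ℓ - m_k`; the second says that a
point closer to `c'_j` than half the distance `d(c'_j, c'_k)` is closer to `c'_j` than to `c'_k`.
-/

section

variable {X : Type*} [PseudoMetricSpace X]

theorem dist_lt_dist_of_moved_s9 {p a a' b b' : X} {ma mb : ℝ}
    (ha : dist a a' ≤ ma) (hb : dist b b' ≤ mb) (h : dist p a + ma < dist p b - mb) :
    dist p a' < dist p b' := by
  have hpa' : dist p a' ≤ dist p a + ma := (dist_triangle p a a').trans (by linarith)
  have hpb' : dist p b - mb ≤ dist p b' := by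
    have := dist_triangle p b' b
    rw [dist_comm b' b] at this
    linarith
  linarith

theorem dist_lt_dist_of_lt_half_dist {p a b : X} (h : dist p a < dist b a / 2) :
    dist p a < dist p b := by
  have := dist_triangle b p a
  rw [dist_comm b p] at this
  linarith

end

theorem stmt_9_general {X : Type*} [MetricSpace X] {ι : Type*} [Fintype ι] [DecidableEq ι]
    (c c' : ι → X) (m : ι → ℝ) (p : X) (j : ι)
    (hne : (Finset.univ.erase j).Nonempty)
    (u ℓ : ℝ)
    (hmove : ∀ i, dist (c i) (c' i) ≤ m i)
    (hℓ : ∀ k ≠ j, ℓ ≤ dist p (c k))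
    (hu : dist p (c j) ≤ u)
    (h : max (ℓ - Finset.univ.sup' ⟨j, Finset.mem_univ j⟩ m)
          ((Finset.univ.erase j).inf' hne (fun k => dist (c' k) (c' j)) / 2)
        > u + m j) :
    ∀ k ≠ j, dist p (c' j) < dist p (c' k) := by
  intro k hk
  rcases lt_max_iff.mp h with hdrift | hsep
  · refine dist_lt_dist_of_moved_s9 (hmove j) (hmove k) ?_
    have hmk : m k ≤ Finset.univ.sup' ⟨j, Finset.mem_univ j⟩ m :=
      Finset.le_sup' m (Finset.mem_univ k)
    linarith [hℓ k hk]
  · have hpj' : dist p (c' j) ≤ u + m j :=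
      (dist_triangle p (c j) (c' j)).trans (add_le_add hu (hmove j))
    have hinf : (Finset.univ.erase j).inf' hne (fun k => dist (c' k) (c' j))
        ≤ dist (c' k) (c' j) :=
      Finset.inf'_le _ (Finset.mem_erase.mpr ⟨hk, Finset.mem_univ k⟩)
    exact dist_lt_dist_of_lt_half_dist (by linarith)

theorem stmt_9 {X : Type*} [MetricSpace X] {ι : Type*} [Fintype ι] [DecidableEq ι]
    (c c' : ι → X) (m : ι → ℝ) (hm0 : ∀ i, 0 ≤ m i) (p : X) (j : ι)
    (hne : (Finset.univ.erase j).Nonempty)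
    (u ℓ : ℝ)
    (howner : ∀ i, dist p (c j) ≤ dist p (c i))
    (hmove : ∀ i, dist (c i) (c' i) ≤ m i)
    (hℓ : ∀ k ≠ j, ℓ ≤ dist p (c k))
    (hu : dist p (c j) ≤ u)
    (h : max (ℓ - Finset.univ.sup' ⟨j, Finset.mem_univ j⟩ m)
          ((Finset.univ.erase j).inf' hne (fun k => dist (c' k) (c' j)) / 2)
        > u + m j) :
    ∀ k ≠ j, dist p (c' j) < dist p (c' k) :=
  stmt_9_general c c' m p j hne u ℓ hmove hℓ hu h
end

section
/- Suppose every point of D has the same nearest centroid c_j among C at the current iteration, ub ≥ max_{q∈D} d(q, c_j), lb ≤ min_{q∈D} min_{k≠j} d(q, c_k), each centroid c_i moves to c_i' with d(c_i, c_i') ≤ m_i, and ub + m_j < lb − max_i m_i. Then every point of D has unique nearest updated centroid c_j'. -/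
theorem dist_lt_dist_of_dist_le {X : Type*} [PseudoMetricSpace X] {q a a' b b' : X}
    {r s ma mb : ℝ} (ha : dist q a ≤ r) (hb : s ≤ dist q b) (hma : dist a a' ≤ ma)
    (hmb : dist b b' ≤ mb) (h : r + ma < s - mb) : dist q a' < dist q b' :=
  calc dist q a' ≤ dist q a + dist a a' := dist_triangle q a a'
    _ < dist q b - dist b b' := by linarith
    _ ≤ dist q b' := by linarith [dist_triangle_right q b b']

theorem stmt_16_general {X : Type*} [MetricSpace X] {K : ℕ}
    (D : Set X)
    (c c' : Fin K → X) (m : Fin K → ℝ)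
    (j : Fin K) (ub lb : ℝ)
    (hub : ∀ q ∈ D, dist q (c j) ≤ ub)
    (hlb : ∀ q ∈ D, ∀ k ≠ j, lb ≤ dist q (c k))
    (hmove : ∀ i, dist (c i) (c' i) ≤ m i)
    (h : ub + m j < lb - Finset.univ.sup' ⟨j, Finset.mem_univ j⟩ m) :
    ∀ q ∈ D, ∀ k ≠ j, dist q (c' j) < dist q (c' k) := by
  intro q hq k hk
  have hmk : m k ≤ Finset.univ.sup' ⟨j, Finset.mem_univ j⟩ m :=
    Finset.le_sup' m (Finset.mem_univ k)
  exact dist_lt_dist_of_dist_le (hub q hq) (hlb q hq k hk) (hmove j) (hmove k) (by linarith)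

theorem stmt_16 {X : Type*} [MetricSpace X] {K : ℕ} (hK : 2 ≤ K)
    (D : Set X) (hD : D.Nonempty)
    (c c' : Fin K → X) (m : Fin K → ℝ) (hm0 : ∀ i, 0 ≤ m i)
    (j : Fin K) (ub lb : ℝ)
    (hown : ∀ q ∈ D, ∀ k, dist q (c j) ≤ dist q (c k))
    (hub : ∀ q ∈ D, dist q (c j) ≤ ub)
    (hlb : ∀ q ∈ D, ∀ k ≠ j, lb ≤ dist q (c k))
    (hmove : ∀ i, dist (c i) (c' i) ≤ m i)
    (h : ub + m j < lb - Finset.univ.sup' ⟨j, Finset.mem_univ j⟩ m) :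
    ∀ q ∈ D, ∀ k ≠ j, dist q (c' j) < dist q (c' k) :=
  stmt_16_general D c c' m j ub lb hub hlb hmove h
end
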